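/- Consider the qubit amplitude-damping channel Λ_{1,ξ} with Kraus operators F_1 = diag(1, √ξ) and F_3 = [[0, √(1−ξ)],[0,0]]. Then ‖(Λ_{1,1/2} ⊗ I)(|Φ_2⟩⟨Φ_2|) − (1/2)(Λ_{1,0} ⊗ I)(|Φ_2⟩⟨Φ_2|)‖_1 = √2/2, while ‖Λ_{1,1/2}(|2⟩⟨2|) − (1/2)Λ_{1,0}(|2⟩⟨2|)‖_1 = 1/2; in particular the maximally entangled input gives a strictly larger trace-norm distance. -/

import Mathlib

open ComplexOrder

open scoped Matrix

open Kronecker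

/-- The square root of a positive semidefinite matrix, as in the older Mathlib
(removed there since). -/
noncomputable def Matrix.PosSemidef.sqrt {𝕜 : Type*} [RCLike 𝕜] {n : Type*} [Fintype n]
    [DecidableEq n] {A : Matrix n n 𝕜} (hA : A.PosSemidef) : Matrix n n 𝕜 :=
  hA.1.eigenvectorUnitary.1 * Matrix.diagonal ((↑) ∘ (√·) ∘ hA.1.eigenvalues) *
    (star hA.1.eigenvectorUnitary : Matrix n n 𝕜)

/-- The trace norm ‖A‖₁ = tr √(A†A). -/
noncomputable def traceNorm {n : Type*} [Fintype n] [DecidableEq n]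
    (A : Matrix n n ℂ) : ℝ :=
  ((Matrix.posSemidef_conjTranspose_mul_self A).sqrt.trace).re

/-- Kraus operator F₁ = diag(1, √ξ) of the amplitude damping channel. -/
noncomputable def F1 (ξ : ℝ) : Matrix (Fin 2) (Fin 2) ℂ :=
  !![1, 0; 0, (Real.sqrt ξ : ℂ)]

/-- Kraus operator F₃ = [[0, √(1−ξ)],[0,0]] of the amplitude damping channel. -/
noncomputable def F3 (ξ : ℝ) : Matrix (Fin 2) (Fin 2) ℂ :=
  !![0, (Real.sqrt (1 - ξ) : ℂ); 0, 0]

/-- The amplitude damping channel Λ_{1,ξ}. -/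
noncomputable def damp (ξ : ℝ) (ρ : Matrix (Fin 2) (Fin 2) ℂ) :
    Matrix (Fin 2) (Fin 2) ℂ :=
  F1 ξ * ρ * (F1 ξ)ᴴ + F3 ξ * ρ * (F3 ξ)ᴴ

/-- The channel Λ_{1,ξ} ⊗ I on two qubits. -/
noncomputable def dampI (ξ : ℝ) (ρ : Matrix (Fin 2 × Fin 2) (Fin 2 × Fin 2) ℂ) :
    Matrix (Fin 2 × Fin 2) (Fin 2 × Fin 2) ℂ :=
  (F1 ξ ⊗ₖ (1 : Matrix (Fin 2) (Fin 2) ℂ)) * ρ * (F1 ξ ⊗ₖ (1 : Matrix (Fin 2) (Fin 2) ℂ))ᴴ +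
    (F3 ξ ⊗ₖ (1 : Matrix (Fin 2) (Fin 2) ℂ)) * ρ * (F3 ξ ⊗ₖ (1 : Matrix (Fin 2) (Fin 2) ℂ))ᴴ

/-- The two-qubit maximally entangled state |Φ₂⟩⟨Φ₂|. -/
noncomputable def Phi2 : Matrix (Fin 2 × Fin 2) (Fin 2 × Fin 2) ℂ :=
  Matrix.of fun p q => if p.1 = p.2 ∧ q.1 = q.2 then (1 / 2 : ℂ) else 0

/-! Both differences have an explicit spectral decomposition. The qubit one is diagonal,
`diag(1 - ξ - s, ξ)`. At `ξ = s = 1/2` the two-qubit one is supported on the span of `|00⟩, |11⟩`,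
where it equals `((1 + √2)/4) Φ⁺ + ((1 - √2)/4) Φ⁻` in the Bell basis. The trace norm of
`∑ dᵢ uᵢuᵢ*` over an orthonormal family is `∑ |dᵢ|`. -/

open Matrix

open scoped MatrixOrder in
theorem Matrix.PosSemidef.sqrt_eq_of_mul_self {n : Type*} [Fintype n] [DecidableEq n]
    {B S : Matrix n n ℂ} (hB : B.PosSemidef) (hS : S.PosSemidef) (h : S * S = B) :
    hB.sqrt = S := by
  rw [← CFC.sqrt_unique h hS.nonneg, CFC.sqrt_eq_real_sqrt B hB.nonneg, cfcₙ_eq_cfc,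
    hB.1.cfc_eq, IsHermitian.cfc, PosSemidef.sqrt]
  simp

section TraceNorm

variable {n : Type*} [Fintype n] [DecidableEq n]

theorem traceNorm_eq_re_trace_of_mul_self {A S : Matrix n n ℂ} (hS : S.PosSemidef)
    (h : S * S = Aᴴ * A) : traceNorm A = S.trace.re := by
  rw [traceNorm, PosSemidef.sqrt_eq_of_mul_self _ hS h]

variable {ι : Type*} [Fintype ι] [DecidableEq ι]

theorem sum_smul_vecMulVec_mul_sum_smul_vecMulVec {u : ι → n → ℂ}
    (hu : ∀ i j, star (u i) ⬝ᵥ u j = if i = j then 1 else 0) (a b : ι → ℂ) :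
    (∑ i, a i • vecMulVec (u i) (star (u i))) * (∑ j, b j • vecMulVec (u j) (star (u j))) =
      ∑ i, (a i * b i) • vecMulVec (u i) (star (u i)) := by
  simp_rw [Finset.sum_mul_sum, smul_mul_smul_comm, vecMulVec_mul_vecMulVec, hu, ite_smul,
    one_smul, zero_smul]
  simp [apply_ite (vecMulVec _)]

/-- `∑ |dᵢ| uᵢuᵢ*` is a positive semidefinite square root of `AᴴA`. -/
theorem traceNorm_sum_smul_vecMulVec {u : ι → n → ℂ}
    (hu : ∀ i j, star (u i) ⬝ᵥ u j = if i = j then 1 else 0) (d : ι → ℝ) :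
    traceNorm (∑ i, (d i : ℂ) • vecMulVec (u i) (star (u i))) = ∑ i, |d i| := by
  have hS : (∑ i, ((|d i| : ℝ) : ℂ) • vecMulVec (u i) (star (u i))).PosSemidef :=
    posSemidef_sum _ fun i _ =>
      (posSemidef_vecMulVec_self_star (u i)).smul (by exact_mod_cast abs_nonneg (d i))
  rw [traceNorm_eq_re_trace_of_mul_self hS]
  · simp [trace_sum, dotProduct_comm _ (star _), hu]
  · simp_rw [conjTranspose_sum, conjTranspose_smul, conjTranspose_vecMulVec, star_star,
      Complex.star_def, Complex.conj_ofReal, sum_smul_vecMulVec_mul_sum_smul_vecMulVec hu,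
      ← Complex.ofReal_mul, abs_mul_abs_self]

theorem traceNorm_diagonal_ofReal (d : n → ℝ) :
    traceNorm (diagonal fun i => (d i : ℂ)) = ∑ i, |d i| := by
  have hu : ∀ i j : n, star (Pi.single i (1 : ℂ)) ⬝ᵥ Pi.single j 1 = if i = j then 1 else 0 := by
    intro i j
    simp [Pi.single_apply, eq_comm]
  rw [← traceNorm_sum_smul_vecMulVec hu d]
  congr 1
  ext i j
  by_cases h : i = j <;> simp [vecMulVec_apply, Pi.single_apply, Matrix.sum_apply, h]

end TraceNorm

theorem damp_single_one_one (ξ : ℝ) (h0 : 0 ≤ ξ) (h1 : ξ ≤ 1) :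
    damp ξ (single 1 1 1) = diagonal fun i => ((![1 - ξ, ξ] i : ℝ) : ℂ) := by
  ext i j
  simp only [damp, Matrix.add_apply, Matrix.mul_apply, Fin.sum_univ_two]
  fin_cases i <;> fin_cases j <;>
    simp [F1, F3, ← Complex.ofReal_mul, Real.mul_self_sqrt h0,
      Real.mul_self_sqrt (sub_nonneg.2 h1)]

noncomputable def bell (k : Fin 2) : Fin 2 × Fin 2 → ℂ :=
  fun p => if p.1 = p.2 then (if k = 1 ∧ p.1 = 1 then -1 else 1) / ((√2 : ℝ) : ℂ) else 0

theorem bell_orthonormal (i j : Fin 2) :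
    star (bell i) ⬝ᵥ bell j = if i = j then 1 else 0 := by
  have hsqrt : ((√2 : ℝ) : ℂ) ^ 2 = 2 := by norm_cast; simp
  fin_cases i <;> fin_cases j <;>
    simp [bell, dotProduct, Fintype.sum_prod_type] <;> grind

theorem dampI_Phi2_sub_smul :
    dampI (1 / 2) Phi2 - ((1 : ℝ) / 2 : ℂ) • dampI 0 Phi2 =
      ∑ k, ((![(1 + √2) / 4, (1 - √2) / 4] k : ℝ) : ℂ) • vecMulVec (bell k) (star (bell k)) := by
  have hsqrt : ((√2 : ℝ) : ℂ) ^ 2 = 2 := by norm_cast; simp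
  simp only [dampI, F3, show (1 : ℝ) - 1 / 2 = 1 / 2 by norm_num]
  ext ⟨i, j⟩ ⟨k, l⟩
  fin_cases i <;> fin_cases j <;> fin_cases k <;> fin_cases l <;>
    simp [F1, Phi2, bell, Matrix.mul_apply, Fintype.sum_prod_type, Fin.sum_univ_two,
      vecMulVec_apply] <;> grind

theorem traceNorm_damp_single_one_one_sub_smul (ξ s : ℝ) (h0 : 0 ≤ ξ) (h1 : ξ ≤ 1) :
    traceNorm (damp ξ (single 1 1 1) - (s : ℂ) • damp 0 (single 1 1 1)) = |1 - ξ - s| + ξ := by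
  have h : damp ξ (single 1 1 1) - (s : ℂ) • damp 0 (single 1 1 1) =
      diagonal fun i => ((![1 - ξ - s, ξ] i : ℝ) : ℂ) := by
    rw [damp_single_one_one ξ h0 h1, damp_single_one_one 0 le_rfl zero_le_one]
    ext i j
    fin_cases i <;> fin_cases j <;> simp
  rw [h, traceNorm_diagonal_ofReal, Fin.sum_univ_two]
  simp [abs_of_nonneg h0]

theorem traceNorm_dampI_Phi2_sub_smul :
    traceNorm (dampI (1 / 2) Phi2 - ((1 : ℝ) / 2 : ℂ) • dampI 0 Phi2) = √2 / 2 := by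
  rw [dampI_Phi2_sub_smul, traceNorm_sum_smul_vecMulVec bell_orthonormal, Fin.sum_univ_two]
  have hsqrt := Real.one_lt_sqrt_two
  simp only [Matrix.cons_val_zero, Matrix.cons_val_one]
  rw [abs_of_pos (by positivity), abs_of_neg (by linarith)]
  ring

/-- For the amplitude damping channel, the maximally entangled input gives a strictly
    larger trace-norm distance than the input |2⟩⟨2|. -/
theorem stmt14 :
    traceNorm (dampI (1 / 2) Phi2 - ((1 : ℝ) / 2 : ℂ) • dampI 0 Phi2) = Real.sqrt 2 / 2 ∧
    traceNorm (damp (1 / 2) (Matrix.single 1 1 1)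
        - ((1 : ℝ) / 2 : ℂ) • damp 0 (Matrix.single 1 1 1)) = 1 / 2 ∧
    traceNorm (damp (1 / 2) (Matrix.single 1 1 1)
        - ((1 : ℝ) / 2 : ℂ) • damp 0 (Matrix.single 1 1 1)) <
      traceNorm (dampI (1 / 2) Phi2 - ((1 : ℝ) / 2 : ℂ) • dampI 0 Phi2) := by
  have hentangled := traceNorm_dampI_Phi2_sub_smul
  have hexcited : traceNorm (damp (1 / 2) (single 1 1 1)
      - ((1 : ℝ) / 2 : ℂ) • damp 0 (single 1 1 1)) = 1 / 2 := by
    -- `((1 : ℝ) / 2 : ℂ)` elaborates as `((1 : ℝ) : ℂ) / 2`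
    rw [show ((1 : ℝ) / 2 : ℂ) = ((1 / 2 : ℝ) : ℂ) by push_cast; rfl,
      traceNorm_damp_single_one_one_sub_smul _ _ (by norm_num) (by norm_num)]
    norm_num
  refine ⟨hentangled, hexcited, ?_⟩
  rw [hentangled, hexcited]
  linarith [Real.one_lt_sqrt_two]
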